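/- For every sequence of finite sets (Sₖ)_{k≥1} with |Sₖ| ≥ 2 for all k and liminf_{k→∞} |Sₖ|/k > 3, there exists a constant C such that: for every n and every collection 𝒜 of hyperplanes covering Q = S₁ × ⋯ × Sₙ, either two hyperplanes of 𝒜 are parallel, or some A ∈ 𝒜 has F(A) ⊆ {1, …, C}. -/

import Mathlib

open Finset

attribute [local instance] Classical.propDecidable

/-- A hyperplane in a product `∀ i, S i`: each coordinate factor is either
the full set or a singleton. -/
structure Hyperplane {ι : Type*} (S : ι → Type*) where
  Y : ∀ i, Set (S i)
  full_or_singleton : ∀ i, Y i = Set.univ ∨ ∃ a, Y i = {a}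

namespace Hyperplane

variable {ι : Type*} {S : ι → Type*}

/-- The set of points of the hyperplane. -/
def toSet (A : Hyperplane S) : Set (∀ i, S i) := {x | ∀ i, x i ∈ A.Y i}

/-- The set of fixed coordinates. -/
def fixedSet (A : Hyperplane S) : Set ι := {i | A.Y i ≠ Set.univ}

/-- The fixed coordinates as a `Finset`. -/
noncomputable def fixedFinset [Fintype ι] (A : Hyperplane S) : Finset ι :=
  Finset.univ.filter fun i => A.Y i ≠ Set.univ

end Hyperplane

section AuxLemmas

/-- The key double powerset identity. -/
lemma double_powerset_sum (q : ℕ → ℝ) (s : Finset ℕ) :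
    ∑ t ∈ s.powerset, ∑ u ∈ s.powerset, ∏ i ∈ t ∪ u, q i = ∏ i ∈ s, (1 + 3 * q i) := by
  induction s using Finset.induction_on with
  | empty => simp
  | @insert a s ha ih =>
    have hinj : ∀ x ∈ s.powerset, ∀ y ∈ s.powerset, insert a x = insert a y → x = y := by
      intro x hx y hy h
      have hax : a ∉ x := fun hc => ha (Finset.mem_powerset.1 hx hc)
      have hay : a ∉ y := fun hc => ha (Finset.mem_powerset.1 hy hc)
      rw [← Finset.erase_insert hax, ← Finset.erase_insert hay, h]
    have hdisj : Disjoint s.powerset (s.powerset.image (insert a)) := by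
      rw [Finset.disjoint_left]
      intro t ht htim
      obtain ⟨u, hu, rfl⟩ := Finset.mem_image.1 htim
      exact ha (Finset.mem_powerset.1 ht (Finset.mem_insert_self a u))
    have hnotmem : ∀ t ∈ s.powerset, ∀ u ∈ s.powerset, a ∉ t ∪ u := by
      intro t ht u hu hc
      rcases Finset.mem_union.1 hc with h | h
      · exact ha (Finset.mem_powerset.1 ht h)
      · exact ha (Finset.mem_powerset.1 hu h)
    rw [Finset.powerset_insert]
    rw [Finset.sum_union hdisj]
    have e1 : ∀ t ∈ s.powerset,
        ∑ u ∈ s.powerset ∪ s.powerset.image (insert a), ∏ i ∈ t ∪ u, q i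
        = (∑ u ∈ s.powerset, ∏ i ∈ t ∪ u, q i)
          + q a * ∑ u ∈ s.powerset, ∏ i ∈ t ∪ u, q i := by
      intro t ht
      rw [Finset.sum_union hdisj, Finset.sum_image hinj, Finset.mul_sum]
      congr 1
      refine Finset.sum_congr rfl fun u hu => ?_
      rw [Finset.union_insert, Finset.prod_insert (hnotmem t ht u hu)]
    have e2 : ∀ t ∈ s.powerset,
        ∑ u ∈ s.powerset ∪ s.powerset.image (insert a), ∏ i ∈ insert a t ∪ u, q i
        = q a * (∑ u ∈ s.powerset, ∏ i ∈ t ∪ u, q i)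
          + q a * ∑ u ∈ s.powerset, ∏ i ∈ t ∪ u, q i := by
      intro t ht
      rw [Finset.sum_union hdisj, Finset.sum_image hinj, Finset.mul_sum]
      congr 1
      · refine Finset.sum_congr rfl fun u hu => ?_
        rw [Finset.insert_union, Finset.prod_insert (hnotmem t ht u hu)]
      · refine Finset.sum_congr rfl fun u hu => ?_
        rw [Finset.insert_union, Finset.union_insert, Finset.insert_idem,
          Finset.prod_insert (hnotmem t ht u hu)]
    rw [Finset.sum_congr rfl e1, Finset.sum_image hinj, Finset.sum_congr rfl e2]
    rw [Finset.prod_insert ha, ← ih]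
    rw [Finset.sum_add_distrib, Finset.sum_add_distrib, ← Finset.mul_sum]
    ring

/-- Harmonic-log bound. -/
lemma sum_inv_le_log (k0 : ℕ) (hk0 : 1 ≤ k0) : ∀ j, k0 ≤ j →
    ∑ i ∈ Finset.Ico k0 j, (1 : ℝ) / i ≤ 1 / k0 - 1 / j + Real.log j - Real.log k0 := by
  intro j hj
  induction j, hj using Nat.le_induction with
  | base => simp
  | succ j hj ih =>
    rw [Finset.sum_Ico_succ_top hj]
    have hj1 : (1 : ℝ) ≤ (j : ℝ) := by exact_mod_cast le_trans hk0 hj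
    have hj0 : (0 : ℝ) < (j : ℝ) := by linarith
    have hj10 : (0 : ℝ) < (j : ℝ) + 1 := by linarith
    have hpos : (0 : ℝ) < (j : ℝ) / ((j : ℝ) + 1) := by positivity
    have hlog : Real.log ((j : ℝ) / ((j : ℝ) + 1)) ≤ (j : ℝ) / ((j : ℝ) + 1) - 1 :=
      Real.log_le_sub_one_of_pos hpos
    rw [Real.log_div (by linarith) (by linarith)] at hlog
    have hfrac : (j : ℝ) / ((j : ℝ) + 1) - 1 = -(1 / ((j : ℝ) + 1)) := by
      field_simp
      ring
    rw [hfrac] at hlog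
    have key : 1 / ((j : ℝ) + 1) ≤ Real.log ((j : ℝ) + 1) - Real.log j := by linarith
    have hcast : ((j + 1 : ℕ) : ℝ) = (j : ℝ) + 1 := by push_cast; ring
    rw [hcast]
    have h1j : (1 : ℝ) / j = 1 / ((j : ℝ) + 1) + (1 / (j : ℝ) - 1 / ((j : ℝ) + 1)) := by ring
    linarith

end AuxLemmas

section Defs
set_option linter.unusedSectionVars false

variable {n : ℕ} {T : Fin n → Type*} [∀ i, Fintype (T i)] [∀ i, Nonempty (T i)]

/-- The fixed value of a hyperplane at a coordinate. -/
noncomputable def hval (A : Hyperplane T) (i : Fin n) : T i :=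
  if h : ∃ a, A.Y i = {a} then h.choose else Classical.arbitrary _

lemma hY (A : Hyperplane T) {i : Fin n} (hi : i ∈ A.fixedFinset) :
    A.Y i = {hval A i} := by
  have hne : A.Y i ≠ Set.univ := (Finset.mem_filter.1 hi).2
  rcases A.full_or_singleton i with h | h
  · exact absurd h hne
  · rw [hval, dif_pos h]
    exact h.choose_spec

/-- The top (largest) fixed coordinate. -/
noncomputable def topc (A : Hyperplane T) : ℕ := A.fixedFinset.sup (fun i => i.val)

lemma topc_le (A : Hyperplane T) {i : Fin n} (hi : i ∈ A.fixedFinset) : i.val ≤ topc A :=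
  Finset.le_sup hi

lemma topc_mem (A : Hyperplane T) (hne : A.fixedFinset.Nonempty) :
    ∃ i ∈ A.fixedFinset, topc A = i.val :=
  Finset.exists_mem_eq_sup _ hne _

/-- Still alive below `m` : matches its fixed values at all coordinates `< m`. -/
def alivB (y : ∀ i, T i) (m : ℕ) (A : Hyperplane T) : Prop :=
  ∀ i ∈ A.fixedFinset, i.val < m → y i = hval A i

/-- pair weight -/
noncomputable def Wgt (q : ℕ → ℝ) (m j : ℕ) (A B : Hyperplane T) (y : ∀ i, T i) : ℝ :=
  (∏ i ∈ (((A.fixedFinset ∪ B.fixedFinset).image Fin.val).erase j).filter (fun i => m ≤ i), q i)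
    * (if alivB y m A then 1 else 0) * (if alivB y m B then 1 else 0)

/-- Pair sum at level `j`. -/
noncomputable def Psum (𝒜 : Finset (Hyperplane T)) (q : ℕ → ℝ) (m j : ℕ) (y : ∀ i, T i) : ℝ :=
  ∑ A ∈ 𝒜.filter (fun A => topc A = j), ∑ B ∈ 𝒜.filter (fun A => topc A = j), Wgt q m j A B y

/-- The potential. -/
noncomputable def Phi (𝒜 : Finset (Hyperplane T)) (q r : ℕ → ℝ) (m : ℕ) (y : ∀ i, T i) : ℝ :=
  ∑ j ∈ Finset.Ico m n, Psum 𝒜 q m j y / (r j) ^ 2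

lemma Wgt_nonneg {q : ℕ → ℝ} (hq : ∀ i, 0 ≤ q i) (m j : ℕ) (A B : Hyperplane T)
    (y : ∀ i, T i) : 0 ≤ Wgt q m j A B y := by
  unfold Wgt
  have h1 : (0:ℝ) ≤ ∏ i ∈ (((A.fixedFinset ∪ B.fixedFinset).image Fin.val).erase j).filter
      (fun i => m ≤ i), q i := Finset.prod_nonneg fun i _ => hq i
  positivity

lemma Psum_nonneg {𝒜 : Finset (Hyperplane T)} {q : ℕ → ℝ} (hq : ∀ i, 0 ≤ q i) (m j : ℕ)
    (y : ∀ i, T i) : 0 ≤ Psum 𝒜 q m j y :=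
  Finset.sum_nonneg fun A _ => Finset.sum_nonneg fun B _ => Wgt_nonneg hq m j A B y

lemma alivB_update_iff {y : ∀ i, T i} {m : ℕ} (hm : m < n) (v : T ⟨m, hm⟩)
    (A : Hyperplane T) :
    alivB (Function.update y ⟨m, hm⟩ v) (m + 1) A ↔
      (alivB y m A ∧ ((⟨m, hm⟩ : Fin n) ∈ A.fixedFinset → v = hval A ⟨m, hm⟩)) := by
  constructor
  · intro h
    constructor
    · intro i hi hilt
      have hne : i ≠ (⟨m, hm⟩ : Fin n) := by
        intro hc; rw [hc] at hilt; exact lt_irrefl m hilt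
      have := h i hi (Nat.lt_succ_of_lt hilt)
      rwa [Function.update_of_ne hne] at this
    · intro him
      have := h _ him (Nat.lt_succ_self m)
      rwa [Function.update_self] at this
  · rintro ⟨h1, h2⟩ i hi hilt
    rcases Nat.lt_succ_iff_lt_or_eq.1 hilt with h | h
    · have hne : i ≠ (⟨m, hm⟩ : Fin n) := by
        intro hc; rw [hc] at h; exact lt_irrefl m h
      rw [Function.update_of_ne hne]
      exact h1 i hi h
    · have hieq : i = (⟨m, hm⟩ : Fin n) := Fin.ext h
      subst hieq
      rw [Function.update_self]
      exact h2 hi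

end Defs
set_option maxHeartbeats 1600000 in
/-- The main theorem: if `|S_k| ≥ 2` for all `k` and `liminf |S_k|/k > 3`, then there
is a constant `C` such that any covering of `S_0 × ⋯ × S_{n-1}` by hyperplanes either
contains two parallel hyperplanes, or contains a hyperplane all of whose fixed
coordinates lie among the first `C` coordinates. -/
theorem hyperplane_min_fixed_coordinate (S : ℕ → Type*) [∀ k, Fintype (S k)]
    (h2 : ∀ k, 2 ≤ Fintype.card (S k))
    (hliminf : 3 < Filter.liminf (fun k => (Fintype.card (S k) : ℝ) / k) Filter.atTop) :
    ∃ C : ℕ, ∀ (n : ℕ) (𝒜 : Finset (Hyperplane (fun i : Fin n => S i.val))),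
      (⋃ A ∈ 𝒜, A.toSet) = Set.univ →
      (∃ A₁ ∈ 𝒜, ∃ A₂ ∈ 𝒜, A₁ ≠ A₂ ∧ A₁.fixedFinset = A₂.fixedFinset) ∨
      ∃ A ∈ 𝒜, ∀ i ∈ A.fixedFinset, (i : ℕ) < C := by
  classical
  haveI hne : ∀ k, Nonempty (S k) := fun k => Fintype.card_pos_iff.mp (by have := h2 k; omega)
  set s : ℕ → ℝ := fun k => (Fintype.card (S k) : ℝ) with hs_def
  have hs2 : ∀ k, (2:ℝ) ≤ s k := fun k => by
    show (2:ℝ) ≤ (Fintype.card (S k) : ℝ); exact_mod_cast h2 k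
  have hspos : ∀ k, (0:ℝ) < s k := fun k => lt_of_lt_of_le two_pos (hs2 k)
  obtain ⟨b, hb3, k0, hk01, hk0⟩ :
      ∃ b : ℝ, 3 < b ∧ ∃ k0 : ℕ, 1 ≤ k0 ∧ ∀ k, k0 ≤ k → b * k ≤ s k := by
    set L := Filter.liminf (fun k => (Fintype.card (S k) : ℝ) / k) Filter.atTop with hL
    have hbdd : Filter.IsBoundedUnder (· ≥ ·) Filter.atTop
        (fun k : ℕ => (Fintype.card (S k) : ℝ) / k) :=
      Filter.isBoundedUnder_of ⟨0, fun k => by positivity⟩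
    refine ⟨(3 + L)/2, by linarith, ?_⟩
    have hev : ∀ᶠ k in Filter.atTop, (3 + L)/2 < (Fintype.card (S k) : ℝ) / k :=
      Filter.eventually_lt_of_lt_liminf (by rw [← hL]; linarith) hbdd
    obtain ⟨k1, hk1⟩ := Filter.eventually_atTop.1 hev
    refine ⟨max k1 1, le_max_right _ _, ?_⟩
    intro k hk
    have hk1' : k1 ≤ k := le_trans (le_max_left _ _) hk
    have h1k : 1 ≤ k := le_trans (le_max_right _ _) hk
    have hkpos : (0:ℝ) < k := by exact_mod_cast h1k
    have h := hk1 k hk1'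
    have := (lt_div_iff₀ hkpos).1 h
    exact le_of_lt this
  have hb0 : (0:ℝ) < b := by linarith
  set c : ℝ := (3 + b)/2 with hc_def
  have hc3 : (3:ℝ) < c := by rw [hc_def]; linarith
  have hcb : c < b := by rw [hc_def]; linarith
  have hc0 : (0:ℝ) < c := by linarith
  set q : ℕ → ℝ := fun i => b / (c * s i) with hq_def
  have hq0 : ∀ i, 0 < q i := fun i => div_pos hb0 (mul_pos hc0 (hspos i))
  have hq0' : ∀ i, 0 ≤ q i := fun i => le_of_lt (hq0 i)
  have hqk : ∀ i : ℕ, k0 ≤ i → q i ≤ 1/(c * i) := by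
    intro i hi
    have hi1 : (1:ℝ) ≤ i := by exact_mod_cast le_trans hk01 hi
    have hipos : (0:ℝ) < i := by linarith
    have hsi : b * i ≤ s i := hk0 i hi
    have h1 : (0:ℝ) < c * (b * i) := by positivity
    have h2' : c * (b * i) ≤ c * s i := by nlinarith
    have h3 : b / (c * s i) ≤ b / (c * (b * i)) :=
      div_le_div_of_nonneg_left (le_of_lt hb0) h1 h2'
    have h4 : b / (c * (b * i)) = 1 / (c * i) := by
      field_simp
    show b / (c * s i) ≤ 1/(c * i)
    rw [← h4]
    exact h3
  set r : ℕ → ℝ := fun j => ((b - c)/b) * s j with hr_def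
  have hr0 : ∀ j, 0 < r j := fun j => mul_pos (div_pos (by linarith) hb0) (hspos j)
  have hrk : ∀ j : ℕ, k0 ≤ j → (b - c) * j ≤ r j := by
    intro j hj
    have hsj := hk0 j hj
    have hbc : (0:ℝ) < b - c := by linarith
    show (b - c) * j ≤ ((b - c)/b) * s j
    have h1 : (b - c) * (j:ℝ) = ((b-c)/b) * (b * j) := by field_simp
    rw [h1]
    have h2' : (0:ℝ) < (b-c)/b := div_pos hbc hb0
    nlinarith
  have hq_inv : ∀ m, 1 / q m = c * s m / b := by
    intro m
    rw [hq_def, one_div_div]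
  set θ : ℝ := 2 - 3/c with hθ_def
  have hθ : 1 < θ := by
    rw [hθ_def]
    have : 3/c < 1 := (div_lt_one hc0).2 (by linarith)
    linarith
  set A0 : ℝ := Real.exp (3 * (∑ i ∈ Finset.range k0, q i) + (3/c) * (1/(k0:ℝ))
      - (3/c) * Real.log k0) with hA0_def
  have hA0pos : 0 < A0 := Real.exp_pos _
  set g : ℕ → ℝ := fun j => (A0 / (b - c)^2) * (((j:ℝ) ^ θ))⁻¹ with hg_def
  have hg0 : ∀ j, 0 ≤ g j := by
    intro j
    have : (0:ℝ) ≤ ((j:ℝ) ^ θ)⁻¹ := by positivity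
    have h2' : (0:ℝ) ≤ A0 / (b - c)^2 := by positivity
    exact mul_nonneg h2' this
  have hgsum : Summable g :=
    (Real.summable_nat_rpow_inv.2 hθ).mul_left _
  have hterm : ∀ j : ℕ, k0 ≤ j →
      (∏ i ∈ Finset.range j, (1 + 3 * q i)) / (r j)^2 ≤ g j := by
    intro j hj
    have hj1 : (1:ℝ) ≤ (j:ℝ) := by exact_mod_cast le_trans hk01 hj
    have hjpos : (0:ℝ) < (j:ℝ) := by linarith
    have hk0pos : (0:ℝ) < (k0:ℝ) := by exact_mod_cast hk01
    have h1 : ∏ i ∈ Finset.range j, (1 + 3 * q i)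
        ≤ Real.exp (∑ i ∈ Finset.range j, 3 * q i) := by
      rw [Real.exp_sum]
      refine Finset.prod_le_prod (fun i _ => by have := hq0 i; positivity) (fun i _ => ?_)
      have := Real.add_one_le_exp (3 * q i)
      linarith
    have hsplit : ∑ i ∈ Finset.range j, 3 * q i
        = (∑ i ∈ Finset.range k0, 3 * q i) + ∑ i ∈ Finset.Ico k0 j, 3 * q i := by
      rw [← Finset.sum_range_add_sum_Ico _ hj]
    have hIco : ∑ i ∈ Finset.Ico k0 j, 3 * q i
        ≤ (3/c) * (1/(k0:ℝ) - 1/(j:ℝ) + Real.log j - Real.log k0) := by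
      have hb1 : ∑ i ∈ Finset.Ico k0 j, 3 * q i
          ≤ ∑ i ∈ Finset.Ico k0 j, (3/c) * (1/(i:ℝ)) := by
        refine Finset.sum_le_sum fun i hi => ?_
        have hik0 : k0 ≤ i := (Finset.mem_Ico.1 hi).1
        have hle := hqk i hik0
        have hi1 : (1:ℝ) ≤ (i:ℝ) := by exact_mod_cast le_trans hk01 hik0
        have hieq : (3:ℝ)/c * (1/(i:ℝ)) = 3 * (1/(c * i)) := by
          rw [div_mul_div_comm, mul_one_div]
          congr 1
          ring
        rw [hieq]
        linarith
      have hb2 := sum_inv_le_log k0 hk01 j hj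
      calc ∑ i ∈ Finset.Ico k0 j, 3 * q i
          ≤ ∑ i ∈ Finset.Ico k0 j, (3/c) * (1/(i:ℝ)) := hb1
        _ = (3/c) * ∑ i ∈ Finset.Ico k0 j, (1:ℝ)/(i:ℝ) := by rw [Finset.mul_sum]
        _ ≤ (3/c) * (1/(k0:ℝ) - 1/(j:ℝ) + Real.log j - Real.log k0) := by
            have h3c : (0:ℝ) ≤ 3/c := by positivity
            exact mul_le_mul_of_nonneg_left hb2 h3c
    have h2' : ∑ i ∈ Finset.range j, 3 * q i
        ≤ (3 * (∑ i ∈ Finset.range k0, q i) + (3/c) * (1/(k0:ℝ)) - (3/c) * Real.log k0)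
          + (3/c) * Real.log j := by
      have hexp : (3/c) * (1/(k0:ℝ) - 1/(j:ℝ) + Real.log j - Real.log k0)
          = (3/c) * (1/(k0:ℝ)) - (3/c) * (1/(j:ℝ)) + (3/c) * Real.log j
            - (3/c) * Real.log k0 := by ring
      have hpos : (0:ℝ) ≤ (3/c) * (1/(j:ℝ)) := by positivity
      have hfirst : ∑ i ∈ Finset.range k0, 3 * q i = 3 * ∑ i ∈ Finset.range k0, q i := by
        rw [Finset.mul_sum]
      rw [hsplit, hfirst]
      rw [hexp] at hIco
      linarith
    have hnum : ∏ i ∈ Finset.range j, (1 + 3 * q i) ≤ A0 * Real.exp ((3/c) * Real.log j) := by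
      rw [hA0_def, ← Real.exp_add]
      exact le_trans h1 (Real.exp_le_exp.2 h2')
    have hbc : (0:ℝ) < b - c := by linarith
    have hden : ((b-c) * (j:ℝ))^2 ≤ (r j)^2 :=
      pow_le_pow_left₀ (by positivity) (hrk j hj) 2
    have hdpos : (0:ℝ) < ((b-c) * (j:ℝ))^2 := by positivity
    have hrj2 : (0:ℝ) < (r j)^2 := pow_pos (hr0 j) 2
    have hprodpos : (0:ℝ) ≤ ∏ i ∈ Finset.range j, (1 + 3 * q i) :=
      Finset.prod_nonneg fun i _ => by have := hq0 i; positivity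
    have step1 : (∏ i ∈ Finset.range j, (1 + 3 * q i)) / (r j)^2
        ≤ (∏ i ∈ Finset.range j, (1 + 3 * q i)) / ((b-c) * (j:ℝ))^2 :=
      div_le_div_of_nonneg_left hprodpos hdpos hden
    have step2 : (∏ i ∈ Finset.range j, (1 + 3 * q i)) / ((b-c) * (j:ℝ))^2
        ≤ (A0 * Real.exp ((3/c) * Real.log j)) / ((b-c) * (j:ℝ))^2 :=
      (div_le_div_iff_of_pos_right hdpos).2 hnum
    have hgeq : (A0 * Real.exp ((3/c) * Real.log j)) / ((b-c) * (j:ℝ))^2 = g j := by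
      have hL : (j:ℝ)^θ = Real.exp (Real.log j * θ) := Real.rpow_def_of_pos hjpos θ
      have hj2 : ((j:ℝ))^2 = Real.exp (Real.log j * 2) := by
        rw [show Real.log (j:ℝ) * 2 = Real.log j + Real.log j by ring, Real.exp_add,
          Real.exp_log hjpos]
        ring
      have hsplit2 : Real.exp (Real.log j * 2)
          = Real.exp (Real.log j * θ) * Real.exp ((3/c) * Real.log j) := by
        rw [← Real.exp_add]
        congr 1
        rw [hθ_def]
        ring
      rw [hg_def]
      show (A0 * Real.exp ((3/c) * Real.log j)) / ((b-c) * (j:ℝ))^2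
          = (A0 / (b - c)^2) * (((j:ℝ) ^ θ))⁻¹
      rw [hL, mul_pow, hj2, hsplit2]
      have he1 : Real.exp (Real.log j * θ) ≠ 0 := Real.exp_ne_zero _
      have he2 : Real.exp ((3/c) * Real.log j) ≠ 0 := Real.exp_ne_zero _
      field_simp
    rw [hgeq] at step2
    exact le_trans step1 step2
  obtain ⟨C, hCk0, hC1, hCtail⟩ : ∃ C : ℕ, k0 ≤ C ∧ 1 ≤ C ∧ ∑' i : ℕ, g (i + C) < 1 := by
    have htail : Filter.Tendsto (fun N => ∑' i : ℕ, g (i + N)) Filter.atTop (nhds 0) :=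
      tendsto_sum_nat_add g
    have h1' : ∀ᶠ N in Filter.atTop, ∑' i : ℕ, g (i + N) < 1 :=
      htail.eventually_lt_const (by norm_num)
    obtain ⟨C, hCa, hCb⟩ := (h1'.and (Filter.eventually_ge_atTop (max k0 1))).exists
    exact ⟨C, le_trans (le_max_left _ _) hCb, le_trans (le_max_right _ _) hCb, hCa⟩
  refine ⟨C, ?_⟩
  intro n 𝒜 hcover
  by_contra hcon
  push_neg at hcon
  obtain ⟨hnp, hbig⟩ := hcon
  haveI hneT : ∀ i : Fin n, Nonempty (S i.val) := fun i => hne i.val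
  have hFne : ∀ A ∈ 𝒜, A.fixedFinset.Nonempty := by
    intro A hA
    obtain ⟨i, hi, -⟩ := hbig A hA
    exact ⟨i, hi⟩
  have htopC : ∀ A ∈ 𝒜, C ≤ topc A := by
    intro A hA
    obtain ⟨i, hi, hiC⟩ := hbig A hA
    exact le_trans hiC (topc_le A hi)
  have htoplt : ∀ A ∈ 𝒜, topc A < n := by
    intro A hA
    obtain ⟨i, hi, heq⟩ := topc_mem A (hFne A hA)
    rw [heq]; exact i.isLt
  have htopfin : ∀ A ∈ 𝒜, ∀ h : topc A < n, (⟨topc A, h⟩ : Fin n) ∈ A.fixedFinset := by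
    intro A hA h
    obtain ⟨i, hi, heq⟩ := topc_mem A (hFne A hA)
    have : (⟨topc A, h⟩ : Fin n) = i := Fin.ext heq
    rw [this]; exact hi
  have hinj : ∀ A ∈ 𝒜, ∀ B ∈ 𝒜, A.fixedFinset = B.fixedFinset → A = B := by
    intro A hA B hB hfix
    by_contra hAB
    exact hnp A hA B hB hAB hfix
  have hmemval : ∀ (A : Hyperplane (fun i : Fin n => S i.val)) (x : ∀ i : Fin n, S i.val),
      x ∈ A.toSet → ∀ i ∈ A.fixedFinset, x i = hval A i := by
    intro A x hx i hi
    have := hx i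
    rwa [hY A hi, Set.mem_singleton_iff] at this
  -- initial pair-sum bound
  have hpinit : ∀ (j : ℕ) (y : ∀ i : Fin n, S i.val),
      Psum 𝒜 q 0 j y ≤ ∏ i ∈ Finset.range j, (1 + 3 * q i) := by
    intro j y
    set filt := 𝒜.filter (fun A => topc A = j) with hfilt
    set e : Hyperplane (fun i : Fin n => S i.val) → Finset ℕ :=
      fun A => (A.fixedFinset.image Fin.val).erase j with he_def
    have hmemP : ∀ A ∈ filt, e A ∈ (Finset.range j).powerset := by
      intro A hA
      rw [Finset.mem_powerset]
      intro i' hi'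
      have h1 : i' ≠ j := Finset.ne_of_mem_erase hi'
      have h2' : i' ∈ A.fixedFinset.image Fin.val := Finset.mem_of_mem_erase hi'
      obtain ⟨i, hi, rfl⟩ := Finset.mem_image.1 h2'
      have hle := topc_le A hi
      have htopA : topc A = j := (Finset.mem_filter.1 hA).2
      rw [Finset.mem_range]
      omega
    have hje : ∀ A ∈ filt, j ∈ A.fixedFinset.image Fin.val := by
      intro A hA
      have hA𝒜 : A ∈ 𝒜 := (Finset.mem_filter.1 hA).1
      have htopA : topc A = j := (Finset.mem_filter.1 hA).2
      have hlt := htoplt A hA𝒜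
      have hmem := htopfin A hA𝒜 hlt
      have hjeq : j = Fin.val (⟨topc A, hlt⟩ : Fin n) := by simp [htopA]
      rw [hjeq]
      exact Finset.mem_image_of_mem _ hmem
    have hinj_e : ∀ A ∈ filt, ∀ B ∈ filt, e A = e B → A = B := by
      intro A hA B hB heq
      have hA𝒜 : A ∈ 𝒜 := (Finset.mem_filter.1 hA).1
      have hB𝒜 : B ∈ 𝒜 := (Finset.mem_filter.1 hB).1
      have h1 : insert j (e A) = A.fixedFinset.image Fin.val := Finset.insert_erase (hje A hA)
      have h2' : insert j (e B) = B.fixedFinset.image Fin.val := Finset.insert_erase (hje B hB)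
      have himg : A.fixedFinset.image Fin.val = B.fixedFinset.image Fin.val := by
        rw [← h1, ← h2', heq]
      have hFF : A.fixedFinset = B.fixedFinset := Finset.image_injective Fin.val_injective himg
      exact hinj A hA𝒜 B hB𝒜 hFF
    have hW0 : ∀ A ∈ filt, ∀ B ∈ filt, Wgt q 0 j A B y = ∏ i ∈ e A ∪ e B, q i := by
      intro A hA B hB
      have hal : ∀ X : Hyperplane (fun i : Fin n => S i.val), alivB y 0 X :=
        fun X i hi h0 => absurd h0 (Nat.not_lt_zero _)
      unfold Wgt
      rw [if_pos (hal A), if_pos (hal B), mul_one, mul_one]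
      rw [Finset.filter_true_of_mem (fun i _ => Nat.zero_le i)]
      rw [Finset.image_union, Finset.erase_union_distrib]
    have hnn : ∀ (t u : Finset ℕ), (0:ℝ) ≤ ∏ i ∈ t ∪ u, q i :=
      fun t u => Finset.prod_nonneg fun i _ => hq0' i
    calc Psum 𝒜 q 0 j y = ∑ A ∈ filt, ∑ B ∈ filt, ∏ i ∈ e A ∪ e B, q i := by
          unfold Psum
          exact Finset.sum_congr rfl fun A hA => Finset.sum_congr rfl fun B hB => hW0 A hA B hB
      _ = ∑ t ∈ filt.image e, ∑ B ∈ filt, ∏ i ∈ t ∪ e B, q i :=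
          (Finset.sum_image (f := fun t => ∑ B ∈ filt, ∏ i ∈ t ∪ e B, q i) hinj_e).symm
      _ = ∑ t ∈ filt.image e, ∑ u ∈ filt.image e, ∏ i ∈ t ∪ u, q i := by
          exact Finset.sum_congr rfl fun t ht =>
            (Finset.sum_image (f := fun u => ∏ i ∈ t ∪ u, q i) hinj_e).symm
      _ ≤ ∑ t ∈ filt.image e, ∑ u ∈ (Finset.range j).powerset, ∏ i ∈ t ∪ u, q i := by
          refine Finset.sum_le_sum fun t ht => ?_
          refine Finset.sum_le_sum_of_subset_of_nonneg ?_ (fun u _ _ => hnn t u)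
          intro u hu
          obtain ⟨B, hB, rfl⟩ := Finset.mem_image.1 hu
          exact hmemP B hB
      _ ≤ ∑ t ∈ (Finset.range j).powerset, ∑ u ∈ (Finset.range j).powerset,
            ∏ i ∈ t ∪ u, q i := by
          refine Finset.sum_le_sum_of_subset_of_nonneg ?_ ?_
          · intro t ht
            obtain ⟨A, hA, rfl⟩ := Finset.mem_image.1 ht
            exact hmemP A hA
          · intro t _ _
            exact Finset.sum_nonneg fun u _ => hnn t u
      _ = ∏ i ∈ Finset.range j, (1 + 3 * q i) := double_powerset_sum q _
  -- initial potential bound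
  have hPhi0 : ∀ y : ∀ i : Fin n, S i.val, Phi 𝒜 q r 0 y < 1 := by
    intro y
    have hzero : ∀ j ∈ Finset.Ico 0 n, j ∉ Finset.Ico C n → Psum 𝒜 q 0 j y / (r j)^2 = 0 := by
      intro j hj hjC
      have hjlt : j < C := by
        rcases Finset.mem_Ico.1 hj with ⟨-, h2''⟩
        by_contra h
        exact hjC (Finset.mem_Ico.2 ⟨not_lt.1 h, h2''⟩)
      have hempty : 𝒜.filter (fun A => topc A = j) = ∅ := by
        rw [Finset.filter_eq_empty_iff]
        intro A hA hAj
        have := htopC A hA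
        omega
      unfold Psum
      rw [hempty, Finset.sum_empty, zero_div]
    have hsub : Finset.Ico C n ⊆ Finset.Ico 0 n := by
      intro j hj
      rcases Finset.mem_Ico.1 hj with ⟨-, h⟩
      exact Finset.mem_Ico.2 ⟨Nat.zero_le _, h⟩
    have heq : Phi 𝒜 q r 0 y = ∑ j ∈ Finset.Ico C n, Psum 𝒜 q 0 j y / (r j)^2 := by
      unfold Phi
      exact (Finset.sum_subset hsub hzero).symm
    rw [heq]
    have hle1 : ∑ j ∈ Finset.Ico C n, Psum 𝒜 q 0 j y / (r j)^2
        ≤ ∑ j ∈ Finset.Ico C n, g j := by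
      refine Finset.sum_le_sum fun j hj => ?_
      have hjC : C ≤ j := (Finset.mem_Ico.1 hj).1
      have hjk0 : k0 ≤ j := le_trans hCk0 hjC
      exact le_trans ((div_le_div_iff_of_pos_right (pow_pos (hr0 j) 2)).2 (hpinit j y)) (hterm j hjk0)
    have hle2 : ∑ j ∈ Finset.Ico C n, g j ≤ ∑' i : ℕ, g (i + C) := by
      rw [Finset.sum_Ico_eq_sum_range]
      rw [Finset.sum_congr rfl fun i _ => by rw [Nat.add_comm C i]]
      exact Summable.sum_le_tsum _ (fun i _ => hg0 _) ((summable_nat_add_iff C).2 hgsum)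
    linarith
  -- the inductive step
  have hstep : ∀ (m : ℕ) (hm : m < n) (y : ∀ i : Fin n, S i.val),
      Phi 𝒜 q r m y < 1 → (∀ A ∈ 𝒜, topc A < m → ¬ alivB y m A) →
      ∃ y', Phi 𝒜 q r (m+1) y' < 1 ∧ (∀ A ∈ 𝒜, topc A < m + 1 → ¬ alivB y' (m+1) A) := by
    intro m hm y hPhiy hInv
    set filtm := 𝒜.filter (fun A => topc A = m) with hfiltm
    set Alv := filtm.filter (fun A => alivB y m A) with hAlv_def
    set Bad := Alv.image (fun A => hval A (⟨m, hm⟩ : Fin n)) with hBad_def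
    set Gd := Finset.univ \ Bad with hGd_def
    -- (a) value of the pair sum at level m
    have hWmm : Psum 𝒜 q m m y = ((Alv.card : ℝ))^2 := by
      unfold Psum
      have hW : ∀ A ∈ filtm, ∀ B ∈ filtm, Wgt q m m A B y
          = (if alivB y m A then (1:ℝ) else 0) * (if alivB y m B then (1:ℝ) else 0) := by
        intro A hA B hB
        have htA : topc A = m := (Finset.mem_filter.1 hA).2
        have htB : topc B = m := (Finset.mem_filter.1 hB).2
        have hempty : (((A.fixedFinset ∪ B.fixedFinset).image Fin.val).erase m).filter
            (fun i => m ≤ i) = ∅ := by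
          rw [Finset.filter_eq_empty_iff]
          intro i' hi'
          have h1 : i' ≠ m := Finset.ne_of_mem_erase hi'
          have h2' : i' ∈ (A.fixedFinset ∪ B.fixedFinset).image Fin.val :=
            Finset.mem_of_mem_erase hi'
          obtain ⟨i, hi, rfl⟩ := Finset.mem_image.1 h2'
          rcases Finset.mem_union.1 hi with h | h
          · have := topc_le A h; omega
          · have := topc_le B h; omega
        unfold Wgt
        rw [hempty, Finset.prod_empty, one_mul]
      rw [Finset.sum_congr rfl (fun A hA => Finset.sum_congr rfl (fun B hB => hW A hA B hB))]
      rw [← Finset.sum_mul_sum]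
      rw [Finset.sum_boole]
      rw [hAlv_def]
      ring
    -- (b) the number of alive top hyperplanes is < r m
    have hNr : ((Alv.card : ℝ)) < r m := by
      have hmem : m ∈ Finset.Ico m n := Finset.mem_Ico.2 ⟨le_rfl, hm⟩
      have hsingle : Psum 𝒜 q m m y / (r m)^2 ≤ Phi 𝒜 q r m y := by
        unfold Phi
        refine Finset.single_le_sum (f := fun j => Psum 𝒜 q m j y / (r j)^2) ?_ hmem
        intro j _
        exact div_nonneg (Psum_nonneg hq0' m j y) (le_of_lt (pow_pos (hr0 j) 2))
      rw [hWmm] at hsingle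
      have h2'' := lt_of_le_of_lt hsingle hPhiy
      have h3 : (0:ℝ) < (r m)^2 := pow_pos (hr0 m) 2
      have h1 : ((Alv.card:ℝ))^2 < (r m)^2 := by
        calc ((Alv.card:ℝ))^2 = (((Alv.card:ℝ))^2 / (r m)^2) * (r m)^2 := by rw [div_mul_cancel₀ _ (ne_of_gt h3)]
        _ < 1 * (r m)^2 := mul_lt_mul_of_pos_right h2'' h3
        _ = (r m)^2 := one_mul _
      nlinarith [hr0 m, (Nat.cast_nonneg Alv.card : (0:ℝ) ≤ (Alv.card : ℝ))]
    -- (c) number of good values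
    have hGdcard : 1 / q m < (Gd.card : ℝ) := by
      have h1 : Gd.card = Fintype.card (S m) - Bad.card := by
        rw [hGd_def, Finset.card_sdiff_of_subset (Finset.subset_univ _), Finset.card_univ]
      have hsm : s m = (Fintype.card (S m) : ℝ) := rfl
      have h2'' : (Gd.card : ℝ) = s m - (Bad.card : ℝ) := by
        rw [h1, Nat.cast_sub (Finset.card_le_univ Bad), hsm]
      have hBadAlv : (Bad.card : ℝ) ≤ (Alv.card : ℝ) := by
        exact_mod_cast (Finset.card_image_le : Bad.card ≤ Alv.card)
      have h4 : s m - r m < (Gd.card:ℝ) := by rw [h2'']; linarith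
      have h5 : s m - r m = (c/b) * s m := by
        show s m - ((b-c)/b) * s m = (c/b) * s m
        field_simp
        ring
      have h6 : (c/b) * s m = 1 / q m := by rw [hq_inv m]; ring
      rw [h5, h6] at h4
      exact h4
    have hq_invpos : (0:ℝ) < 1 / q m := by have := hq0 m; positivity
    have hGdne : Gd.Nonempty := by
      rw [← Finset.card_pos]
      have : (0:ℝ) < (Gd.card : ℝ) := lt_trans hq_invpos hGdcard
      exact_mod_cast this
    have hGdq : 1 ≤ (Gd.card : ℝ) * q m := by
      have := (div_lt_iff₀ (hq0 m)).1 hGdcard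
      linarith
    -- per-pair averaging bound
    have hpair : ∀ (j : ℕ), m < j → ∀ (A B : Hyperplane (fun i : Fin n => S i.val)),
        topc A = j → topc B = j →
        ∑ v ∈ Gd, Wgt q (m+1) j A B (Function.update y (⟨m, hm⟩ : Fin n) v)
          ≤ (Gd.card : ℝ) * Wgt q m j A B y := by
      intro j hmj A B htA htB
      set U := ((A.fixedFinset ∪ B.fixedFinset).image Fin.val).erase j with hU_def
      set P1 : ℝ := ∏ i ∈ U.filter (fun i => m+1 ≤ i), q i with hP1_def
      have hP1nn : (0:ℝ) ≤ P1 := Finset.prod_nonneg fun i _ => hq0' i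
      by_cases hmU : m ∈ U
      · have hfilter : U.filter (fun i => m ≤ i) = insert m (U.filter (fun i => m+1 ≤ i)) := by
          ext i
          simp only [Finset.mem_filter, Finset.mem_insert]
          constructor
          · rintro ⟨hiU, hile⟩
            rcases eq_or_lt_of_le hile with h | h
            · exact Or.inl h.symm
            · exact Or.inr ⟨hiU, h⟩
          · rintro (rfl | ⟨hiU, h⟩)
            · exact ⟨hmU, le_rfl⟩
            · exact ⟨hiU, le_trans (Nat.le_succ m) h⟩
        have hmnotin : m ∉ U.filter (fun i => m+1 ≤ i) := by
          intro h
          have := (Finset.mem_filter.1 h).2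
          omega
        have hPm : ∏ i ∈ U.filter (fun i => m ≤ i), q i = q m * P1 := by
          rw [hfilter, Finset.prod_insert hmnotin, hP1_def]
        have hor : (⟨m, hm⟩ : Fin n) ∈ A.fixedFinset ∨ (⟨m, hm⟩ : Fin n) ∈ B.fixedFinset := by
          have h2' := Finset.mem_of_mem_erase hmU
          obtain ⟨i, hi, hival⟩ := Finset.mem_image.1 h2'
          have hieq : i = (⟨m, hm⟩ : Fin n) := Fin.ext hival
          rw [← hieq]
          exact Finset.mem_union.1 hi
        by_cases hal : alivB y m A ∧ alivB y m B
        · obtain ⟨w, hw⟩ : ∃ w, ∀ v,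
              alivB (Function.update y (⟨m, hm⟩ : Fin n) v) (m+1) A →
              alivB (Function.update y (⟨m, hm⟩ : Fin n) v) (m+1) B → v = w := by
            rcases hor with h | h
            · exact ⟨hval A ⟨m, hm⟩, fun v hA' _ => ((alivB_update_iff hm v A).1 hA').2 h⟩
            · exact ⟨hval B ⟨m, hm⟩, fun v _ hB' => ((alivB_update_iff hm v B).1 hB').2 h⟩
          have hWv : ∀ v ∈ Gd, Wgt q (m+1) j A B (Function.update y (⟨m, hm⟩ : Fin n) v)
              ≤ P1 * (if v = w then 1 else 0) := by
            intro v _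
            by_cases hv : v = w
            · rw [if_pos hv, mul_one]
              show (∏ i ∈ U.filter (fun i => m+1 ≤ i), q i) * _ * _ ≤ P1
              rw [← hP1_def]
              have h01A : (0:ℝ) ≤ (if alivB (Function.update y (⟨m, hm⟩ : Fin n) v) (m+1) A
                  then (1:ℝ) else 0) ∧ (if alivB (Function.update y (⟨m, hm⟩ : Fin n) v) (m+1) A
                  then (1:ℝ) else 0) ≤ 1 := by split <;> norm_num
              have h01B : (0:ℝ) ≤ (if alivB (Function.update y (⟨m, hm⟩ : Fin n) v) (m+1) B
                  then (1:ℝ) else 0) ∧ (if alivB (Function.update y (⟨m, hm⟩ : Fin n) v) (m+1) B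
                  then (1:ℝ) else 0) ≤ 1 := by split <;> norm_num
              have hAB1 := mul_le_mul h01A.2 h01B.2 h01B.1 zero_le_one
              have hABn := mul_le_mul_of_nonneg_left hAB1 hP1nn
              nlinarith [hABn]
            · rw [if_neg hv, mul_zero]
              have hnand : ¬(alivB (Function.update y (⟨m, hm⟩ : Fin n) v) (m+1) A ∧
                  alivB (Function.update y (⟨m, hm⟩ : Fin n) v) (m+1) B) := by
                rintro ⟨hA', hB'⟩
                exact hv (hw v hA' hB')
              rcases not_and_or.1 hnand with h | h
              · show (∏ i ∈ U.filter (fun i => m+1 ≤ i), q i) * _ * _ ≤ (0:ℝ)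
                rw [if_neg h, mul_zero, zero_mul]
              · show (∏ i ∈ U.filter (fun i => m+1 ≤ i), q i) * _ * _ ≤ (0:ℝ)
                rw [if_neg h, mul_zero]
          have hWm : Wgt q m j A B y = q m * P1 := by
            show (∏ i ∈ U.filter (fun i => m ≤ i), q i) * _ * _ = q m * P1
            rw [if_pos hal.1, if_pos hal.2, mul_one, mul_one, hPm]
          rw [hWm]
          have hsum1 : ∑ v ∈ Gd, Wgt q (m+1) j A B (Function.update y (⟨m, hm⟩ : Fin n) v)
              ≤ P1 * ∑ v ∈ Gd, (if v = w then (1:ℝ) else 0) := by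
            rw [Finset.mul_sum]
            exact Finset.sum_le_sum hWv
          have hsum2 : ∑ v ∈ Gd, (if v = w then (1:ℝ) else 0) ≤ 1 := by
            rw [Finset.sum_ite_eq' Gd w (fun _ => (1:ℝ))]
            split <;> norm_num
          have hP1le : P1 * ∑ v ∈ Gd, (if v = w then (1:ℝ) else 0) ≤ P1 :=
            le_trans (mul_le_mul_of_nonneg_left hsum2 hP1nn) (le_of_eq (mul_one P1))
          have hfinal : P1 ≤ (Gd.card : ℝ) * (q m * P1) := by
            have h1 := mul_le_mul_of_nonneg_right hGdq hP1nn
            calc P1 = 1 * P1 := (one_mul P1).symm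
            _ ≤ ((Gd.card : ℝ) * q m) * P1 := h1
            _ = (Gd.card : ℝ) * (q m * P1) := by ring
          exact le_trans hsum1 (le_trans hP1le hfinal)
        · have hzero : ∀ v ∈ Gd,
              Wgt q (m+1) j A B (Function.update y (⟨m, hm⟩ : Fin n) v) = 0 := by
            intro v _
            rcases not_and_or.1 hal with h | h
            · have hA' : ¬ alivB (Function.update y (⟨m, hm⟩ : Fin n) v) (m+1) A :=
                fun hc => h ((alivB_update_iff hm v A).1 hc).1
              show (∏ i ∈ U.filter (fun i => m+1 ≤ i), q i) * _ * _ = (0:ℝ)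
              rw [if_neg hA', mul_zero, zero_mul]
            · have hB' : ¬ alivB (Function.update y (⟨m, hm⟩ : Fin n) v) (m+1) B :=
                fun hc => h ((alivB_update_iff hm v B).1 hc).1
              show (∏ i ∈ U.filter (fun i => m+1 ≤ i), q i) * _ * _ = (0:ℝ)
              rw [if_neg hB', mul_zero]
          rw [Finset.sum_eq_zero hzero]
          exact mul_nonneg (Nat.cast_nonneg _) (Wgt_nonneg hq0' m j A B y)
      · -- m ∉ U : nothing changes
        have hnotA : (⟨m, hm⟩ : Fin n) ∉ A.fixedFinset := by
          intro h
          apply hmU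
          rw [hU_def]
          refine Finset.mem_erase.2 ⟨by omega, ?_⟩
          exact Finset.mem_image.2 ⟨⟨m, hm⟩, Finset.mem_union_left _ h, rfl⟩
        have hnotB : (⟨m, hm⟩ : Fin n) ∉ B.fixedFinset := by
          intro h
          apply hmU
          rw [hU_def]
          refine Finset.mem_erase.2 ⟨by omega, ?_⟩
          exact Finset.mem_image.2 ⟨⟨m, hm⟩, Finset.mem_union_right _ h, rfl⟩
        have hfeq : U.filter (fun i => m ≤ i) = U.filter (fun i => m+1 ≤ i) := by
          apply Finset.filter_congr
          intro i hiU
          have hne' : i ≠ m := fun h => hmU (h ▸ hiU)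
          constructor
          · intro h; omega
          · intro h; omega
        have hindA : ∀ v, alivB (Function.update y (⟨m, hm⟩ : Fin n) v) (m+1) A ↔
            alivB y m A := by
          intro v
          rw [alivB_update_iff hm v A]
          exact ⟨fun h => h.1, fun h => ⟨h, fun hc => absurd hc hnotA⟩⟩
        have hindB : ∀ v, alivB (Function.update y (⟨m, hm⟩ : Fin n) v) (m+1) B ↔
            alivB y m B := by
          intro v
          rw [alivB_update_iff hm v B]
          exact ⟨fun h => h.1, fun h => ⟨h, fun hc => absurd hc hnotB⟩⟩
        have hWveq : ∀ v ∈ Gd, Wgt q (m+1) j A B (Function.update y (⟨m, hm⟩ : Fin n) v)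
            = Wgt q m j A B y := by
          intro v _
          show (∏ i ∈ U.filter (fun i => m+1 ≤ i), q i) * _ * _
            = (∏ i ∈ U.filter (fun i => m ≤ i), q i) * _ * _
          rw [hfeq, if_congr (hindA v) rfl rfl, if_congr (hindB v) rfl rfl]
        rw [Finset.sum_congr rfl hWveq, Finset.sum_const, nsmul_eq_mul]
    -- averaging over good values
    have havg : ∑ v ∈ Gd, Phi 𝒜 q r (m+1) (Function.update y (⟨m, hm⟩ : Fin n) v)
        ≤ ∑ v ∈ Gd, Phi 𝒜 q r m y := by
      rw [Finset.sum_const, nsmul_eq_mul]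
      have hstep1 : ∑ v ∈ Gd, Phi 𝒜 q r (m+1) (Function.update y (⟨m, hm⟩ : Fin n) v)
          = ∑ j ∈ Finset.Ico (m+1) n, ∑ v ∈ Gd,
              Psum 𝒜 q (m+1) j (Function.update y (⟨m, hm⟩ : Fin n) v) / (r j)^2 := by
        unfold Phi
        rw [Finset.sum_comm]
      rw [hstep1]
      have hperj : ∀ j ∈ Finset.Ico (m+1) n,
          ∑ v ∈ Gd, Psum 𝒜 q (m+1) j (Function.update y (⟨m, hm⟩ : Fin n) v) / (r j)^2
          ≤ (Gd.card : ℝ) * (Psum 𝒜 q m j y / (r j)^2) := by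
        intro j hj
        have hmj : m < j := (Finset.mem_Ico.1 hj).1
        rw [← Finset.sum_div, ← mul_div_assoc]
        refine (div_le_div_iff_of_pos_right (pow_pos (hr0 j) 2)).2 ?_
        unfold Psum
        calc ∑ v ∈ Gd, ∑ A ∈ 𝒜.filter (fun A => topc A = j), ∑ B ∈ 𝒜.filter
              (fun A => topc A = j), Wgt q (m+1) j A B (Function.update y (⟨m, hm⟩ : Fin n) v)
            = ∑ A ∈ 𝒜.filter (fun A => topc A = j), ∑ v ∈ Gd, ∑ B ∈ 𝒜.filter
              (fun A => topc A = j), Wgt q (m+1) j A B (Function.update y (⟨m, hm⟩ : Fin n) v) :=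
              Finset.sum_comm
          _ = ∑ A ∈ 𝒜.filter (fun A => topc A = j), ∑ B ∈ 𝒜.filter (fun A => topc A = j),
              ∑ v ∈ Gd, Wgt q (m+1) j A B (Function.update y (⟨m, hm⟩ : Fin n) v) :=
              Finset.sum_congr rfl fun A _ => Finset.sum_comm
          _ ≤ ∑ A ∈ 𝒜.filter (fun A => topc A = j), ∑ B ∈ 𝒜.filter (fun A => topc A = j),
              (Gd.card : ℝ) * Wgt q m j A B y := by
              refine Finset.sum_le_sum fun A hA => Finset.sum_le_sum fun B hB => ?_
              exact hpair j hmj A B (Finset.mem_filter.1 hA).2 (Finset.mem_filter.1 hB).2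
          _ = (Gd.card : ℝ) * ∑ A ∈ 𝒜.filter (fun A => topc A = j), ∑ B ∈ 𝒜.filter
              (fun A => topc A = j), Wgt q m j A B y := by
              rw [Finset.mul_sum]
              exact Finset.sum_congr rfl fun A _ => (Finset.mul_sum _ _ _).symm
      calc ∑ j ∈ Finset.Ico (m+1) n, ∑ v ∈ Gd,
            Psum 𝒜 q (m+1) j (Function.update y (⟨m, hm⟩ : Fin n) v) / (r j)^2
          ≤ ∑ j ∈ Finset.Ico (m+1) n, (Gd.card:ℝ) * (Psum 𝒜 q m j y / (r j)^2) :=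
            Finset.sum_le_sum hperj
        _ ≤ ∑ j ∈ Finset.Ico m n, (Gd.card:ℝ) * (Psum 𝒜 q m j y / (r j)^2) := by
            refine Finset.sum_le_sum_of_subset_of_nonneg
              (Finset.Ico_subset_Ico (Nat.le_succ m) le_rfl) ?_
            intro j _ _
            exact mul_nonneg (Nat.cast_nonneg _)
              (div_nonneg (Psum_nonneg hq0' m j y) (le_of_lt (pow_pos (hr0 j) 2)))
        _ = (Gd.card:ℝ) * Phi 𝒜 q r m y := by
            unfold Phi
            rw [Finset.mul_sum]
    obtain ⟨v, hvGd, hvle⟩ := Finset.exists_le_of_sum_le hGdne havg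
    refine ⟨Function.update y (⟨m, hm⟩ : Fin n) v, lt_of_le_of_lt hvle hPhiy, ?_⟩
    intro A hA htA halive
    have h1 := (alivB_update_iff hm v A).1 halive
    rcases Nat.lt_succ_iff_lt_or_eq.1 htA with h | h
    · exact hInv A hA h h1.1
    · have hlt := htoplt A hA
      have hmemtop := htopfin A hA hlt
      have heqfin : (⟨topc A, hlt⟩ : Fin n) = (⟨m, hm⟩ : Fin n) := Fin.ext h
      rw [heqfin] at hmemtop
      have hv_eq : v = hval A ⟨m, hm⟩ := h1.2 hmemtop
      have hAAlv : A ∈ Alv := by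
        rw [hAlv_def, hfiltm]
        exact Finset.mem_filter.2 ⟨Finset.mem_filter.2 ⟨hA, h⟩, h1.1⟩
      have hvBad : v ∈ Bad := by
        rw [hBad_def, hv_eq]
        exact Finset.mem_image_of_mem _ hAAlv
      have hnotBad := (Finset.mem_sdiff.1 (by rw [hGd_def] at hvGd; exact hvGd)).2
      exact hnotBad hvBad
  have main : ∀ m, m ≤ n → ∃ y, Phi 𝒜 q r m y < 1 ∧
      ∀ A ∈ 𝒜, topc A < m → ¬ alivB y m A := by
    intro m
    induction m with
    | zero =>
      intro _
      refine ⟨fun i => Classical.arbitrary _, hPhi0 _, ?_⟩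
      intro A hA h0
      exact absurd h0 (Nat.not_lt_zero _)
    | succ m ih =>
      intro hm
      obtain ⟨y, h1, h2'⟩ := ih (le_of_lt hm)
      exact hstep m hm y h1 h2'
  obtain ⟨y, -, hInv⟩ := main n le_rfl
  have hy : y ∈ ⋃ A ∈ 𝒜, Hyperplane.toSet A := by
    rw [hcover]; trivial
  rw [Set.mem_iUnion₂] at hy
  obtain ⟨A, hA, hyA⟩ := hy
  refine hInv A hA (htoplt A hA) ?_
  intro i hi _
  exact hmemval A y hyA i hi
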